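/- arXiv:2601.16496 — 3 statements merged into one kernel-verified Lean document; each statement's English description precedes it below -/
import Mathlib

section
/- Let S be a nonempty finite set, let d : S → ℝ satisfy 0 ≤ d v ≤ 1 for every v ∈ S, let c > 0 and g : S → ℝ satisfy g v ≥ c · d v for every v ∈ S, and let λ ≥ 0. Set m = (1/|S|) · Σ_{v∈S} d v. Then (1/|S|) · Σ_{v∈S} (1 + λ · d v) · g v ≥ c · m · (1 + λ · m). -/
/-!
Since `g v ≥ c · d v` and the boost `1 + λ · d v` is nonnegative, the boosted mass is at least
`c · (mean d + λ · mean d²)`, and Jensen's inequality `(mean d)² ≤ mean d²` turns this into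
`c · m · (1 + λ · m)`.
-/

open Finset

theorem mul_sum_add_sum_sq_le_boosted_sum {V : Type*} (S : Finset V) (d g : V → ℝ) (c lam : ℝ)
    (hd0 : ∀ v ∈ S, 0 ≤ d v) (hlam : 0 ≤ lam) (hg : ∀ v ∈ S, c * d v ≤ g v) :
    c * (∑ v ∈ S, d v + lam * ∑ v ∈ S, d v ^ 2) ≤ ∑ v ∈ S, (1 + lam * d v) * g v := by
  have hexpand : c * (∑ v ∈ S, d v + lam * ∑ v ∈ S, d v ^ 2)
      = ∑ v ∈ S, (1 + lam * d v) * (c * d v) := by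
    rw [mul_sum, ← sum_add_distrib, mul_sum]
    exact sum_congr rfl fun v _ => by ring
  rw [hexpand]
  refine sum_le_sum fun v hv => mul_le_mul_of_nonneg_left (hg v hv) ?_
  have := hd0 v hv
  positivity

theorem boosted_gradient_mass_lower_bound_general
    {V : Type*} (S : Finset V)
    (d g : V → ℝ)
    (hd0 : ∀ v ∈ S, 0 ≤ d v)
    (c : ℝ) (hc : 0 < c)
    (hg : ∀ v ∈ S, g v ≥ c * d v)
    (lam : ℝ) (hlam : 0 ≤ lam) :
    (1 / (S.card : ℝ)) * ∑ v ∈ S, (1 + lam * d v) * g v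
      ≥ c * ((1 / (S.card : ℝ)) * ∑ v ∈ S, d v)
          * (1 + lam * ((1 / (S.card : ℝ)) * ∑ v ∈ S, d v)) := by
  set n : ℝ := (S.card : ℝ)
  set m := 1 / n * ∑ v ∈ S, d v
  have hmass := mul_sum_add_sum_sq_le_boosted_sum S d g c lam hd0 hlam hg
  have hjensen : m ^ 2 ≤ 1 / n * ∑ v ∈ S, d v ^ 2 := by
    simpa only [m, one_div_mul_eq_div] using sum_div_card_sq_le_sum_sq_div_card (s := S) (f := d)
  calc c * m * (1 + lam * m) = c * (m + lam * m ^ 2) := by ring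
    _ ≤ c * (m + lam * (1 / n * ∑ v ∈ S, d v ^ 2)) := by gcongr
    _ = 1 / n * (c * (∑ v ∈ S, d v + lam * ∑ v ∈ S, d v ^ 2)) := by ring
    _ ≤ 1 / n * ∑ v ∈ S, (1 + lam * d v) * g v := by gcongr

/-- Per-group step of the gradient-share rectification lemma:
for a nonempty finite set `S`, difficulty scores `d v ∈ [0,1]`,
gradient masses `g v ≥ c * d v` with `c > 0`, boosting strength `lam ≥ 0`,
and mean difficulty `m = (1/|S|) Σ d v`, the boosted average gradient mass
satisfies `(1/|S|) Σ (1 + lam * d v) * g v ≥ c * m * (1 + lam * m)`. -/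
theorem boosted_gradient_mass_lower_bound
    {V : Type*} (S : Finset V) (hS : S.Nonempty)
    (d g : V → ℝ)
    (hd0 : ∀ v ∈ S, 0 ≤ d v) (hd1 : ∀ v ∈ S, d v ≤ 1)
    (c : ℝ) (hc : 0 < c)
    (hg : ∀ v ∈ S, g v ≥ c * d v)
    (lam : ℝ) (hlam : 0 ≤ lam) :
    (1 / (S.card : ℝ)) * ∑ v ∈ S, (1 + lam * d v) * g v
      ≥ c * ((1 / (S.card : ℝ)) * ∑ v ∈ S, d v)
          * (1 + lam * ((1 / (S.card : ℝ)) * ∑ v ∈ S, d v)) :=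
  boosted_gradient_mass_lower_bound_general S d g hd0 c hc hg lam hlam
end

section
/- Let V_min and V_maj be nonempty finite sets, let d be a real-valued function on V_min ∪ V_maj with 0 ≤ d v ≤ 1 for all v, let c > 0 and define g v = c · d v for all v. Suppose d is constant on V_maj, equal to its mean m_maj = (1/|V_maj|) Σ_{v∈V_maj} d v, and that m_maj > 0. Let m_min = (1/|V_min|) Σ_{v∈V_min} d v, and let λ ≥ 0. Define GSD_base = ((1/|V_min|) Σ_{v∈V_min} g v) / ((1/|V_maj|) Σ_{v∈V_maj} g v) and GSD_boost = ((1/|V_min|) Σ_{v∈V_min} (1 + λ d v) g v) / ((1/|V_maj|) Σ_{v∈V_maj} (1 + λ d v) g v). Then GSD_boost ≥ GSD_base · (1 + λ · m_min) / (1 + λ · m_maj). -/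
open Finset
open scoped BigOperators

/-!
With `g = c · d`, the majority group contributes the constant factor `c · m_maj`, resp.
`(1 + λ m_maj) · c · m_maj`, and the minority boosted mean is `c · (m_min + λ · 𝔼 d²)`.
Jensen's inequality `m_min² ≤ 𝔼 d²` on the minority group then gives the claim.
-/

lemma Finset.one_div_card_mul_sum_eq_expect {ι : Type*} (s : Finset ι) (f : ι → ℝ) :
    1 / (#s : ℝ) * ∑ i ∈ s, f i = 𝔼 i ∈ s, f i := by
  rw [expect_eq_sum_div_card, one_div_mul_eq_div]

lemma Finset.sq_expect_le_expect_sq {ι : Type*} (s : Finset ι) (f : ι → ℝ) :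
    (𝔼 i ∈ s, f i) ^ 2 ≤ 𝔼 i ∈ s, f i ^ 2 := by
  simpa only [expect_eq_sum_div_card] using sum_div_card_sq_le_sum_sq_div_card

lemma Finset.expect_mul_one_add_mul_expect_le {ι : Type*} (s : Finset ι) (d : ι → ℝ) {lam : ℝ}
    (hlam : 0 ≤ lam) :
    (𝔼 i ∈ s, d i) * (1 + lam * 𝔼 i ∈ s, d i) ≤ 𝔼 i ∈ s, (1 + lam * d i) * d i := by
  calc (𝔼 i ∈ s, d i) * (1 + lam * 𝔼 i ∈ s, d i)
      = 𝔼 i ∈ s, d i + lam * (𝔼 i ∈ s, d i) ^ 2 := by ring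
    _ ≤ 𝔼 i ∈ s, d i + lam * 𝔼 i ∈ s, d i ^ 2 := by gcongr; exact sq_expect_le_expect_sq s d
    _ = 𝔼 i ∈ s, (1 + lam * d i) * d i := by
      rw [mul_expect, ← expect_add_distrib]
      exact expect_congr rfl fun i _ ↦ by ring

theorem gsd_rectification_general
    {V : Type*} (Vmin Vmaj : Finset V)
    (hmaj : Vmaj.Nonempty)
    (d : V → ℝ)
    (c : ℝ) (hc : 0 < c)
    (g : V → ℝ) (hg : ∀ v, g v = c * d v)
    (mmaj : ℝ)
    (hconst : ∀ v ∈ Vmaj, d v = mmaj)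
    (hmmajpos : 0 < mmaj)
    (mmin : ℝ) (hmmin : mmin = (1 / (Vmin.card : ℝ)) * ∑ v ∈ Vmin, d v)
    (lam : ℝ) (hlam : 0 ≤ lam) :
    ((1 / (Vmin.card : ℝ)) * ∑ v ∈ Vmin, (1 + lam * d v) * g v)
        / ((1 / (Vmaj.card : ℝ)) * ∑ v ∈ Vmaj, (1 + lam * d v) * g v)
      ≥ (((1 / (Vmin.card : ℝ)) * ∑ v ∈ Vmin, g v)
            / ((1 / (Vmaj.card : ℝ)) * ∑ v ∈ Vmaj, g v))
          * ((1 + lam * mmin) / (1 + lam * mmaj)) := by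
  obtain rfl : g = fun v ↦ c * d v := funext hg
  simp only [one_div_card_mul_sum_eq_expect] at hmmin ⊢
  have hmaj_base : 𝔼 v ∈ Vmaj, c * d v = c * mmaj := by
    rw [expect_congr rfl fun v hv ↦ by rw [hconst v hv], expect_const hmaj]
  have hmaj_boost : 𝔼 v ∈ Vmaj, (1 + lam * d v) * (c * d v) = (1 + lam * mmaj) * (c * mmaj) := by
    rw [expect_congr rfl fun v hv ↦ by rw [hconst v hv], expect_const hmaj]
  have hmin_boost : c * (mmin * (1 + lam * mmin)) ≤ 𝔼 v ∈ Vmin, (1 + lam * d v) * (c * d v) := by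
    rw [hmmin, expect_congr rfl fun v _ ↦ mul_left_comm _ c _, ← mul_expect]
    exact mul_le_mul_of_nonneg_left (expect_mul_one_add_mul_expect_le Vmin d hlam) hc.le
  rw [hmaj_base, hmaj_boost, ← mul_expect, ← hmmin, ge_iff_le]
  calc c * mmin / (c * mmaj) * ((1 + lam * mmin) / (1 + lam * mmaj))
      = c * (mmin * (1 + lam * mmin)) / ((1 + lam * mmaj) * (c * mmaj)) := by
        field_simp
    _ ≤ _ := by gcongr

/-- Gradient-share rectification (Lemma 1): with difficulty scores `d v ∈ [0,1]`,
exact difficulty–gradient proportionality `g v = c * d v` (`c > 0`),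
difficulty constant equal to its mean `mmaj > 0` on the majority group,
minority mean difficulty `mmin`, and boosting strength `lam ≥ 0`,
the boosted Gradient Share Disparity satisfies
`GSD_boost ≥ GSD_base * (1 + lam * mmin) / (1 + lam * mmaj)`. -/
theorem gsd_rectification
    {V : Type*} [DecidableEq V] (Vmin Vmaj : Finset V)
    (hmin : Vmin.Nonempty) (hmaj : Vmaj.Nonempty)
    (d : V → ℝ)
    (hd0 : ∀ v ∈ Vmin ∪ Vmaj, 0 ≤ d v) (hd1 : ∀ v ∈ Vmin ∪ Vmaj, d v ≤ 1)
    (c : ℝ) (hc : 0 < c)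
    (g : V → ℝ) (hg : ∀ v, g v = c * d v)
    (mmaj : ℝ) (hmmaj : mmaj = (1 / (Vmaj.card : ℝ)) * ∑ v ∈ Vmaj, d v)
    (hconst : ∀ v ∈ Vmaj, d v = mmaj)
    (hmmajpos : 0 < mmaj)
    (mmin : ℝ) (hmmin : mmin = (1 / (Vmin.card : ℝ)) * ∑ v ∈ Vmin, d v)
    (lam : ℝ) (hlam : 0 ≤ lam) :
    ((1 / (Vmin.card : ℝ)) * ∑ v ∈ Vmin, (1 + lam * d v) * g v)
        / ((1 / (Vmaj.card : ℝ)) * ∑ v ∈ Vmaj, (1 + lam * d v) * g v)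
      ≥ (((1 / (Vmin.card : ℝ)) * ∑ v ∈ Vmin, g v)
            / ((1 / (Vmaj.card : ℝ)) * ∑ v ∈ Vmaj, g v))
          * ((1 + lam * mmin) / (1 + lam * mmaj)) :=
  gsd_rectification_general Vmin Vmaj hmaj d c hc g hg mmaj hconst hmmajpos mmin hmmin lam hlam
end

section
/- Let H be a real inner product space, n ≥ 1, let Δ : Fin n → H be client updates and g ∈ H a direction. Set a m = ⟪Δ m, g⟫ for each m. Let τ : Fin n → ℝ satisfy τ m > 0 for all m, and suppose that for all m, m', if a m < a m' then τ m ≤ τ m'. Let ε > 0, and for weights w : Fin n → ℝ define DR(w) = ⟪Σ_m w m • Δ m, g⟫ / ((1/n) · Σ_m max(a m, 0) + ε). Then DR with boosted weights w_boost m = τ m / Σ_j τ j satisfies DR(w_boost) ≥ DR(w_avg), where w_avg m = 1/n are the uniform FedAvg weights. -/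
/-!
Both numerators are weighted means of the alignments `⟪Δ m, g⟫`, sharing a positive denominator.
Because the trust scores monovary with the alignments, Chebyshev's sum inequality puts the
trust-weighted mean above the plain mean.
-/

open Finset

theorem MonovaryOn.sum_div_card_le_sum_mul_div_sum {ι α : Type*} [Field α] [LinearOrder α]
    [IsStrictOrderedRing α] {s : Finset ι} {w f : ι → α} (hw : ∀ i ∈ s, 0 < w i)
    (hwf : MonovaryOn w f s) :
    (∑ i ∈ s, f i) / #s ≤ (∑ i ∈ s, w i * f i) / ∑ i ∈ s, w i := by
  rcases s.eq_empty_or_nonempty with rfl | hs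
  · simp
  rw [div_le_div_iff₀ (by simpa using hs.card_pos) (sum_pos hw hs),
    mul_comm (∑ i ∈ s, f i), mul_comm _ (#s : α)]
  exact hwf.sum_mul_sum_le_card_mul_sum

theorem real_inner_sum_smul_left {ι E : Type*} [NormedAddCommGroup E] [InnerProductSpace ℝ E]
    (s : Finset ι) (w : ι → ℝ) (v : ι → E) (x : E) :
    inner ℝ (∑ i ∈ s, w i • v i) x = ∑ i ∈ s, w i * inner ℝ (v i) x := by
  simp only [sum_inner, real_inner_smul_left]

theorem trust_gated_DR_ge_fedavg_general
    {H : Type*} [NormedAddCommGroup H] [InnerProductSpace ℝ H]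
    (n : ℕ)
    (Δ : Fin n → H) (g : H)
    (τ : Fin n → ℝ) (hτ : ∀ m, 0 < τ m)
    (hmono : ∀ m m', (inner ℝ (Δ m) g : ℝ) < (inner ℝ (Δ m') g : ℝ) → τ m ≤ τ m')
    (ε : ℝ) (hε : 0 < ε) :
    (inner ℝ (∑ m, (τ m / ∑ j, τ j) • Δ m) g : ℝ)
        / ((1 / (n : ℝ)) * (∑ m, max ((inner ℝ (Δ m) g : ℝ)) 0) + ε)
      ≥ (inner ℝ (∑ m, ((1 : ℝ) / (n : ℝ)) • Δ m) g : ℝ)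
        / ((1 / (n : ℝ)) * (∑ m, max ((inner ℝ (Δ m) g : ℝ)) 0) + ε) := by
  have hmean := MonovaryOn.sum_div_card_le_sum_mul_div_sum (s := univ) (fun m _ => hτ m)
    (Monovary.monovaryOn hmono _)
  rw [card_univ, Fintype.card_fin] at hmean
  rw [ge_iff_le]
  gcongr
  simpa only [real_inner_sum_smul_left, ← mul_sum, one_div_mul_eq_div, div_mul_eq_mul_div, one_mul,
    ← sum_div] using hmean

/-- Trust-gated aggregation improves the dilution ratio (first claim of Theorem 2):
with alignments `a m = ⟪Δ m, g⟫`, positive trust scores `τ` monovarying with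
alignment, and `DR(w) = ⟪Σ_m w m • Δ m, g⟫ / ((1/n) Σ_m max(a m, 0) + ε)`,
the trusted weights `τ m / Σ_j τ j` give a dilution ratio at least as large as
the uniform FedAvg weights `1/n`. -/
theorem trust_gated_DR_ge_fedavg
    {H : Type*} [NormedAddCommGroup H] [InnerProductSpace ℝ H]
    (n : ℕ) (hn : 1 ≤ n)
    (Δ : Fin n → H) (g : H)
    (τ : Fin n → ℝ) (hτ : ∀ m, 0 < τ m)
    (hmono : ∀ m m', (inner ℝ (Δ m) g : ℝ) < (inner ℝ (Δ m') g : ℝ) → τ m ≤ τ m')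
    (ε : ℝ) (hε : 0 < ε) :
    (inner ℝ (∑ m, (τ m / ∑ j, τ j) • Δ m) g : ℝ)
        / ((1 / (n : ℝ)) * (∑ m, max ((inner ℝ (Δ m) g : ℝ)) 0) + ε)
      ≥ (inner ℝ (∑ m, ((1 : ℝ) / (n : ℝ)) • Δ m) g : ℝ)
        / ((1 / (n : ℝ)) * (∑ m, max ((inner ℝ (Δ m) g : ℝ)) 0) + ε) :=
  trust_gated_DR_ge_fedavg_general n Δ g τ hτ hmono ε hε
end
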